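/- arXiv:1001.3655 — 4 statements merged into one kernel-verified Lean document; each statement's English description precedes it below -/
import Mathlib

section
/- Let d ≥ 2 and V = ℂ^d, and let υ_1,…,υ_n ∈ V and u_1,…,u_m ∈ V be arbitrary finite families of vectors. Then there exists a Hermitian operator A on V⊗V which is not block positive, yet the block (⟨υ_i|⊗id) A (|υ_i⟩⊗id) is a positive semidefinite operator on V for every i = 1,…,n and the block (id⊗⟨u_j|) A (id⊗|u_j⟩) is a positive semidefinite operator on V for every j = 1,…,m. -/
open scoped ComplexOrder Kronecker
open Matrix

/-- Square complex matrices of size `n`, i.e. operators on `V = ℂ^n`. -/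
abbrev Mat (n : ℕ) := Matrix (Fin n) (Fin n) ℂ

/-- Operators on `V ⊗ V`, identified with matrices indexed by pairs. -/
abbrev Mat2 (n : ℕ) := Matrix (Fin n × Fin n) (Fin n × Fin n) ℂ

/-- Linear maps on `L(V)`. -/
abbrev MapV (n : ℕ) := Mat n →ₗ[ℂ] Mat n

variable {n : ℕ}

/-- The Jamiołkowski isomorphism `J(Φ) = (Φ ⊗ id)(|ω⟩⟨ω|)`, `ω = Σ_α e_α ⊗ e_α`,
written out in matrix entries: `J(Φ)_{(a,b),(c,d)} = Φ(E_{bd})_{ac}`. -/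
def Jmat (Φ : MapV n) : Mat2 n :=
  Matrix.of fun p q => Φ (Matrix.single p.2 q.2 1) p.1 q.1

/-- The inverse of the Jamiołkowski isomorphism. -/
noncomputable def Jinv (A : Mat2 n) : MapV n where
  toFun ξ := Matrix.of fun α β => ∑ γ, ∑ δ, ξ γ δ * A (α, γ) (β, δ)
  map_add' x y := by
    ext α β
    simp [Matrix.add_apply, add_mul, Finset.sum_add_distrib]
  map_smul' c x := by
    ext α β
    simp [Matrix.smul_apply, smul_eq_mul, Finset.mul_sum, mul_assoc]

/-- The circled product `A ⊙ B = J(J⁻¹(A) ∘ J⁻¹(B))`. -/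
noncomputable def odot (A B : Mat2 n) : Mat2 n := Jmat (Jinv A ∘ₗ Jinv B)

/-- Tensor product of vectors of `V`, as a vector of `V ⊗ V`. -/
def vecTens (u v : Fin n → ℂ) : Fin n × Fin n → ℂ := fun p => u p.1 * v p.2

/-- The maximally entangled (unnormalized) vector `ω = Σ_α e_α ⊗ e_α`. -/
def omegaVec (n : ℕ) : Fin n × Fin n → ℂ := fun p => if p.1 = p.2 then 1 else 0

/-- `A` is `k`-block positive: `⟨Σ u_i⊗v_i, A (Σ u_i⊗v_i)⟩ ≥ 0` for all `u, v`. -/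
def IsKBlockPos (k : ℕ) (A : Mat2 n) : Prop :=
  ∀ u v : Fin k → (Fin n → ℂ),
    0 ≤ star (∑ i, vecTens (u i) (v i)) ⬝ᵥ A.mulVec (∑ i, vecTens (u i) (v i))

/-- `A` is `k`-entangled: it lies in the convex hull of the operators
`|w⟩⟨w|` with `w = Σ_{i=1}^k u_i ⊗ v_i`. -/
def IsKEntangled (k : ℕ) (A : Mat2 n) : Prop :=
  A ∈ convexHull ℝ {M : Mat2 n | ∃ u v : Fin k → (Fin n → ℂ),
    M = Matrix.vecMulVec (∑ i, vecTens (u i) (v i)) (star (∑ i, vecTens (u i) (v i)))}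

/-- The map `Φ ⊗ id_k` on `L(V ⊗ ℂ^k)` (as a plain function on matrices). -/
def tensorIdFun (k : ℕ) (Φ : MapV n) (M : Matrix (Fin n × Fin k) (Fin n × Fin k) ℂ) :
    Matrix (Fin n × Fin k) (Fin n × Fin k) ℂ :=
  Matrix.of fun p q => Φ (Matrix.of fun a b => M (a, p.2) (b, q.2)) p.1 q.1

/-- `Φ` is `k`-positive: `Φ ⊗ id_k` maps positive semidefinite operators on
`V ⊗ ℂ^k` to positive semidefinite operators. -/
def IsKPos (k : ℕ) (Φ : MapV n) : Prop :=
  ∀ M : Matrix (Fin n × Fin k) (Fin n × Fin k) ℂ, M.PosSemidef → (tensorIdFun k Φ M).PosSemidef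

/-- `Φ` is completely positive: `k`-positive for every `k`. -/
def IsCompPos (Φ : MapV n) : Prop := ∀ k, IsKPos k Φ

/-- `Φ` is `k`-superpositive: `Φ(ξ) = Σ_i X_i^* ξ X_i` with all `rank X_i ≤ k`. -/
def IsKSuperPos (k : ℕ) (Φ : MapV n) : Prop :=
  ∃ (m : ℕ) (X : Fin m → Mat n), (∀ i, (X i).rank ≤ k) ∧
    ∀ ξ, Φ ξ = ∑ i, (X i)ᴴ * ξ * X i

/-- The Hilbert–Schmidt inner product on `L(L(V))`:
`(Φ|Ψ) = Σ_{α,β} (Φ(E_{αβ}) | Ψ(E_{αβ}))` over the matrix-unit orthonormal basis. -/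
noncomputable def hsInnerMap (Φ Ψ : MapV n) : ℂ :=
  ∑ α : Fin n, ∑ β : Fin n,
    ((Φ (Matrix.single α β 1))ᴴ * Ψ (Matrix.single α β 1)).trace

/-- The Hilbert–Schmidt trace of a map `Θ` on `L(V)`:
`Tr Θ = Σ_{α,β} (E_{αβ} | Θ(E_{αβ}))`. -/
noncomputable def mapTrace (Θ : MapV n) : ℂ :=
  ∑ α : Fin n, ∑ β : Fin n,
    ((Matrix.single α β (1 : ℂ))ᴴ * Θ (Matrix.single α β 1)).trace

/-- The adjoint of a map `Φ` on `L(V)` with respect to the Hilbert–Schmidt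
inner product `(A|B) = Tr(A^* B)`. -/
noncomputable def hsAdj (Φ : MapV n) : MapV n where
  toFun ξ := ∑ γ : Fin n, ∑ δ : Fin n,
    (((Φ (Matrix.single γ δ 1))ᴴ * ξ).trace) • Matrix.single γ δ 1
  map_add' x y := by
    simp [Matrix.mul_add, Matrix.trace_add, add_smul, Finset.sum_add_distrib]
  map_smul' c x := by
    simp [Matrix.mul_smul, Matrix.trace_smul, smul_smul, Finset.smul_sum]

/-- `Φ` belongs to `J⁻¹(H(V⊗V))`, i.e. `J(Φ)` is Hermitian. -/
def InJinvH (Φ : MapV n) : Prop := (Jmat Φ).IsHermitian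

/-- Dual cone of a set of Hermitian operators on `V ⊗ V`, inside `H(V⊗V)`. -/
def hermDual (S : Set (Mat2 n)) : Set (Mat2 n) :=
  {B | B.IsHermitian ∧ ∀ A ∈ S, 0 ≤ (A * B).trace}

/-- Dual cone of a set of maps, inside `J⁻¹(H(V⊗V))`, with respect to the
Hilbert–Schmidt inner product of maps. -/
def mapDual (S : Set (MapV n)) : Set (MapV n) :=
  {Ψ | InJinvH Ψ ∧ ∀ Φ ∈ S, 0 ≤ hsInnerMap Φ Ψ}

/-- Operators on `ℂ^h ⊗ ℂ^d`. -/
abbrev MatH (h d : ℕ) := Matrix (Fin h × Fin d) (Fin h × Fin d) ℂ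

/-- `ρ` is a state: positive semidefinite with trace one. -/
def IsState {h d : ℕ} (ρ : MatH h d) : Prop := ρ.PosSemidef ∧ ρ.trace = 1

/-- `ρ` can be written as a sum of `l` tensor products of positive semidefinite
operators. -/
def HasSepLen (h d : ℕ) (ρ : MatH h d) (l : ℕ) : Prop :=
  ∃ (A : Fin l → Matrix (Fin h) (Fin h) ℂ) (B : Fin l → Matrix (Fin d) (Fin d) ℂ),
    (∀ i, (A i).PosSemidef) ∧ (∀ i, (B i).PosSemidef) ∧ ρ = ∑ i, A i ⊗ₖ B i

/-- `ρ` is separable: a convex combination of tensor products of states. -/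
def IsSepState (h d : ℕ) (ρ : MatH h d) : Prop :=
  ∃ (l : ℕ) (p : Fin l → ℝ) (A : Fin l → Matrix (Fin h) (Fin h) ℂ)
    (B : Fin l → Matrix (Fin d) (Fin d) ℂ),
    (∀ i, 0 < p i) ∧ (∑ i, p i = 1) ∧
    (∀ i, (A i).PosSemidef ∧ (A i).trace = 1) ∧
    (∀ i, (B i).PosSemidef ∧ (B i).trace = 1) ∧
    ρ = ∑ i, (p i : ℂ) • (A i ⊗ₖ B i)

/-- The length of a separable state: the least `l` such that `ρ` is a sum of `l`
tensor products of positive semidefinite operators. -/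
noncomputable def sepLength (h d : ℕ) (ρ : MatH h d) : ℕ := sInf {l | HasSepLen h d ρ l}

/-- `ρ` is a sum of `r` tensor products of Hermitian operators. -/
def HasHermDecomp (h d : ℕ) (ρ : MatH h d) (r : ℕ) : Prop :=
  ∃ (A : Fin r → Matrix (Fin h) (Fin h) ℂ) (B : Fin r → Matrix (Fin d) (Fin d) ℂ),
    (∀ i, (A i).IsHermitian) ∧ (∀ i, (B i).IsHermitian) ∧ ρ = ∑ i, A i ⊗ₖ B i

/-- The Schmidt rank of `ρ`: the least `r` such that `ρ` is a sum of `r` tensor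
products of Hermitian operators. -/
noncomputable def schmidtRank (h d : ℕ) (ρ : MatH h d) : ℕ := sInf {r | HasHermDecomp h d ρ r}

/-- The block `(⟨υ|⊗id) A (|υ⟩⊗id)` of an operator `A` on `V ⊗ V`. -/
noncomputable def blockFst (A : Mat2 n) (υ : Fin n → ℂ) : Mat n :=
  Matrix.of fun β δ => ∑ α, ∑ γ, star (υ α) * A (α, β) (γ, δ) * υ γ

/-- The block `(id⊗⟨u|) A (id⊗|u⟩)` of an operator `A` on `V ⊗ V`. -/
noncomputable def blockSnd (A : Mat2 n) (u : Fin n → ℂ) : Mat n :=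
  Matrix.of fun α γ => ∑ β, ∑ δ, star (u β) * A (α, β) (γ, δ) * u δ

/-- Real square matrices indexed by pairs: operators on `X ⊗ X`, `X = ℝ^n`. -/
abbrev RMat2 (n : ℕ) := Matrix (Fin n × Fin n) (Fin n × Fin n) ℝ

/-- The partial transposition `(id ⊗ t) A` on operators on `X ⊗ X`. -/
def ptrans (A : RMat2 n) : RMat2 n := Matrix.of fun p q => A (p.1, q.2) (q.1, p.2)

/-- The quartic polynomial `Σ_{a,b,c,d} A_{ab,cd} x^a y^b x^c y^d` associated to
an operator on `X ⊗ X`; `x`-variables are indexed by `Sum.inl`, `y`-variables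
by `Sum.inr`. -/
noncomputable def quarticPoly (A : RMat2 n) : MvPolynomial (Fin n ⊕ Fin n) ℝ :=
  ∑ a, ∑ b, ∑ c, ∑ e, MvPolynomial.C (A (a, b) (c, e)) *
    MvPolynomial.X (Sum.inl a) * MvPolynomial.X (Sum.inr b) *
    MvPolynomial.X (Sum.inl c) * MvPolynomial.X (Sum.inr e)

/-!
Choose `w ≠ 0` in `ℂ^d` proportional to none of the given vectors: since `d ≥ 2`, finitely many
lines do not cover `ℂ^d`. For `A = c‖w‖² · 1 - |w⊗w⟩⟨w⊗w|` one has
`⟨a⊗b, A (a⊗b)⟩ = c‖w‖²‖a‖²‖b‖² - |⟨w,a⟩|²|⟨w,b⟩|²`, which is negative at `a = b = w` as soon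
as `c < ‖w‖²`. Strict Cauchy–Schwarz gives `|⟨w,v⟩|² < ‖w‖²‖v‖²` for each given `v ≠ 0`, so
finitely many of them allow a `c < ‖w‖²` with `|⟨w,v⟩|² ≤ c‖v‖²` for all of them; Cauchy–Schwarz
in the other tensor factor then makes every block positive semidefinite.
-/

open WithLp

theorem Finite.exists_lt_forall_le {ι α : Type*} [Finite ι] [LinearOrder α] [NoMinOrder α]
    {f : ι → α} {c : α} (h : ∀ i, f i < c) : ∃ b < c, ∀ i, f i ≤ b := by
  cases isEmpty_or_nonempty ι
  · obtain ⟨b, hb⟩ := exists_lt c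
    exact ⟨b, hb, isEmptyElim⟩
  · obtain ⟨i, hi⟩ := Finite.exists_max f
    exact ⟨f i, h i, hi⟩

theorem Subspace.exists_ne_zero_forall_notMem_span_singleton {K E ι : Type*} [DivisionRing K]
    [Infinite K] [AddCommGroup E] [Module K E] [Finite ι] (hE : 2 ≤ Module.finrank K E)
    (v : ι → E) : ∃ w ≠ 0, ∀ i, w ∉ K ∙ v i := by
  by_contra! hcover
  -- the line through `0` accounts for the constraint `w ≠ 0`
  obtain ⟨o, ho⟩ := Subspace.exists_eq_top_of_iUnion_eq_univ
    (p := fun o : Option ι => K ∙ o.elim 0 v) <| Set.eq_univ_of_forall fun w => by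
      by_cases hw : w = 0
      · exact Set.mem_iUnion.2 ⟨none, by simp [hw]⟩
      · obtain ⟨i, hi⟩ := hcover w hw
        exact Set.mem_iUnion.2 ⟨some i, hi⟩
  have := finrank_span_le_card (R := K) ({o.elim 0 v} : Set E)
  rw [ho, finrank_top, Set.toFinset_singleton, Finset.card_singleton] at this
  omega

section InnerProductSpace

variable {𝕜 E : Type*} [RCLike 𝕜] [NormedAddCommGroup E] [InnerProductSpace 𝕜 E]

theorem norm_inner_lt_norm_mul_norm_of_notMem_span_singleton {v w : E} (hv : v ≠ 0)
    (hw : w ∉ 𝕜 ∙ v) : ‖inner 𝕜 w v‖ < ‖w‖ * ‖v‖ := by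
  refine (norm_inner_le_norm w v).lt_of_ne fun h => hw ?_
  rw [norm_inner_symm, mul_comm] at h
  have hw0 : w ≠ 0 := fun h0 => hw (h0 ▸ Submodule.zero_mem _)
  obtain ⟨r, -, hr⟩ := (norm_inner_eq_norm_iff (𝕜 := 𝕜) hv hw0).1 h
  exact hr ▸ Submodule.smul_mem _ r (Submodule.mem_span_singleton_self v)

theorem exists_lt_forall_norm_inner_sq_le {ι : Type*} [Finite ι] (v : ι → E) {w : E}
    (hw : ∀ i, w ∉ 𝕜 ∙ v i) :
    ∃ c < ‖w‖ ^ 2, ∀ i, ‖inner 𝕜 w (v i)‖ ^ 2 ≤ c * ‖v i‖ ^ 2 := by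
  have hratio : ∀ i, ‖inner 𝕜 w (v i)‖ ^ 2 / ‖v i‖ ^ 2 < ‖w‖ ^ 2 := by
    intro i
    rcases eq_or_ne (v i) 0 with hvi | hvi
    · have hw0 : w ≠ 0 := fun h0 => hw i (h0 ▸ Submodule.zero_mem _)
      simp [hvi, hw0]
    · rw [div_lt_iff₀ (by positivity), ← mul_pow]
      exact pow_lt_pow_left₀ (norm_inner_lt_norm_mul_norm_of_notMem_span_singleton hvi (hw i))
        (norm_nonneg _) two_ne_zero
  obtain ⟨c, hc, hle⟩ := Finite.exists_lt_forall_le hratio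
  refine ⟨c, hc, fun i => ?_⟩
  rcases eq_or_ne (v i) 0 with hvi | hvi
  · simp [hvi]
  · exact (div_le_iff₀ (by positivity)).1 (hle i)

theorem norm_inner_sq_mul_norm_inner_sq_le {w a : E} {c : ℝ}
    (ha : ‖inner 𝕜 w a‖ ^ 2 ≤ c * ‖a‖ ^ 2) (b : E) :
    ‖inner 𝕜 w a‖ ^ 2 * ‖inner 𝕜 w b‖ ^ 2 ≤ c * ‖w‖ ^ 2 * ‖a‖ ^ 2 * ‖b‖ ^ 2 := by
  have hb : ‖inner 𝕜 w b‖ ^ 2 ≤ ‖w‖ ^ 2 * ‖b‖ ^ 2 := by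
    rw [← mul_pow]
    exact pow_le_pow_left₀ (norm_nonneg _) (norm_inner_le_norm w b) 2
  calc ‖inner 𝕜 w a‖ ^ 2 * ‖inner 𝕜 w b‖ ^ 2 ≤ (c * ‖a‖ ^ 2) * (‖w‖ ^ 2 * ‖b‖ ^ 2) :=
        mul_le_mul ha hb (by positivity) ((sq_nonneg _).trans ha)
    _ = c * ‖w‖ ^ 2 * ‖a‖ ^ 2 * ‖b‖ ^ 2 := by ring

end InnerProductSpace

section Matrix

variable {ι : Type*} [Fintype ι]

theorem star_dotProduct_eq_inner (y z : ι → ℂ) :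
    star y ⬝ᵥ z = inner ℂ (toLp 2 y) (toLp 2 z) := by
  rw [EuclideanSpace.inner_toLp_toLp, dotProduct_comm]

variable [DecidableEq ι]

theorem isHermitian_smul_one_sub_vecMulVec (c : ℝ) (z : ι → ℂ) :
    ((c : ℂ) • (1 : Matrix ι ι ℂ) - vecMulVec z (star z)).IsHermitian :=
  (isHermitian_one.smul (Complex.conj_ofReal c)).sub
    (posSemidef_vecMulVec_self_star z).isHermitian

theorem star_dotProduct_smul_one_sub_vecMulVec_mulVec (c : ℝ) (z y : ι → ℂ) :
    star y ⬝ᵥ ((c : ℂ) • (1 : Matrix ι ι ℂ) - vecMulVec z (star z)) *ᵥ y =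
      ((c * ‖toLp 2 y‖ ^ 2 - ‖inner ℂ (toLp 2 z) (toLp 2 y)‖ ^ 2 : ℝ) : ℂ) := by
  rw [sub_mulVec, smul_mulVec, one_mulVec, vecMulVec_mulVec, dotProduct_sub, dotProduct_smul,
    dotProduct_smul, op_smul_eq_mul, smul_eq_mul]
  simp only [star_dotProduct_eq_inner, inner_self_eq_norm_sq_to_K]
  rw [← inner_conj_symm, RCLike.conj_mul]
  push_cast
  rfl

end Matrix

theorem inner_toLp_vecTens (a b a' b' : Fin n → ℂ) :
    inner ℂ (toLp 2 (vecTens a b)) (toLp 2 (vecTens a' b')) =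
      inner ℂ (toLp 2 a) (toLp 2 a') * inner ℂ (toLp 2 b) (toLp 2 b') := by
  simp only [← star_dotProduct_eq_inner, dotProduct, vecTens, Fintype.sum_prod_type,
    Finset.sum_mul_sum, Pi.star_apply, star_mul]
  exact Finset.sum_congr rfl fun i _ => Finset.sum_congr rfl fun j _ => by ring

theorem norm_toLp_vecTens (a b : Fin n → ℂ) :
    ‖toLp 2 (vecTens a b)‖ = ‖toLp 2 a‖ * ‖toLp 2 b‖ := by
  have h := inner_toLp_vecTens a b a b
  simp only [inner_self_eq_norm_sq_to_K, ← mul_pow] at h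
  exact (pow_left_inj₀ (norm_nonneg _) (by positivity) two_ne_zero).1 (mod_cast h)

theorem star_dotProduct_blockFst_mulVec (A : Mat2 n) (υ x : Fin n → ℂ) :
    star x ⬝ᵥ blockFst A υ *ᵥ x = star (vecTens υ x) ⬝ᵥ A *ᵥ vecTens υ x := by
  simp only [dotProduct, mulVec, blockFst, of_apply, vecTens, Fintype.sum_prod_type,
    Finset.mul_sum, Finset.sum_mul, Pi.star_apply, star_mul]
  conv_rhs => rw [Finset.sum_comm]
  refine Finset.sum_congr rfl fun β _ => ?_
  conv_lhs => rw [Finset.sum_comm]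
  refine Finset.sum_congr rfl fun α _ => ?_
  conv_lhs => rw [Finset.sum_comm]
  exact Finset.sum_congr rfl fun γ _ => Finset.sum_congr rfl fun δ _ => by ring

theorem star_dotProduct_blockSnd_mulVec (A : Mat2 n) (u x : Fin n → ℂ) :
    star x ⬝ᵥ blockSnd A u *ᵥ x = star (vecTens x u) ⬝ᵥ A *ᵥ vecTens x u := by
  simp only [dotProduct, mulVec, blockSnd, of_apply, vecTens, Fintype.sum_prod_type,
    Finset.mul_sum, Finset.sum_mul, Pi.star_apply, star_mul]
  refine Finset.sum_congr rfl fun α _ => ?_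
  conv_lhs => rw [Finset.sum_comm]
  exact Finset.sum_congr rfl fun β _ => Finset.sum_congr rfl fun γ _ =>
    Finset.sum_congr rfl fun δ _ => by ring

theorem Matrix.IsHermitian.blockFst {A : Mat2 n} (hA : A.IsHermitian) (υ : Fin n → ℂ) :
    (blockFst A υ).IsHermitian := by
  ext β δ
  simp only [conjTranspose_apply, _root_.blockFst, of_apply, star_sum, star_mul, star_star,
    hA.apply]
  rw [Finset.sum_comm]
  exact Finset.sum_congr rfl fun α _ => Finset.sum_congr rfl fun γ _ => by ring

theorem Matrix.IsHermitian.blockSnd {A : Mat2 n} (hA : A.IsHermitian) (u : Fin n → ℂ) :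
    (blockSnd A u).IsHermitian := by
  ext α γ
  simp only [conjTranspose_apply, _root_.blockSnd, of_apply, star_sum, star_mul, star_star,
    hA.apply]
  rw [Finset.sum_comm]
  exact Finset.sum_congr rfl fun β _ => Finset.sum_congr rfl fun δ _ => by ring

theorem star_vecTens_dotProduct_mulVec_vecTens (c : ℝ) (w a b : Fin n → ℂ) :
    star (vecTens a b) ⬝ᵥ
        ((c : ℂ) • 1 - vecMulVec (vecTens w w) (star (vecTens w w))) *ᵥ vecTens a b =
      ((c * ‖toLp 2 a‖ ^ 2 * ‖toLp 2 b‖ ^ 2 -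
        ‖inner ℂ (toLp 2 w) (toLp 2 a)‖ ^ 2 * ‖inner ℂ (toLp 2 w) (toLp 2 b)‖ ^ 2 : ℝ) : ℂ) := by
  rw [star_dotProduct_smul_one_sub_vecMulVec_mulVec, norm_toLp_vecTens, inner_toLp_vecTens,
    norm_mul]
  ring_nf

/-- for any finite families `υ_1,…,υ_n` and `u_1,…,u_m` of vectors
in `V = ℂ^d` (`d ≥ 2`), there is a Hermitian operator `A` on `V ⊗ V` which is
not block positive although all the blocks `(⟨υ_i|⊗id) A (|υ_i⟩⊗id)` and
`(id⊗⟨u_j|) A (id⊗|u_j⟩)` are positive semidefinite. -/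
theorem stmt15 (d : ℕ) (hd : 2 ≤ d) (n m : ℕ)
    (υ : Fin n → (Fin d → ℂ)) (u : Fin m → (Fin d → ℂ)) :
    ∃ A : Mat2 d, A.IsHermitian ∧
      ¬ (∀ x y : Fin d → ℂ, 0 ≤ star (vecTens x y) ⬝ᵥ A.mulVec (vecTens x y)) ∧
      (∀ i, (blockFst A (υ i)).PosSemidef) ∧
      (∀ j, (blockSnd A (u j)).PosSemidef) := by
  obtain ⟨⟨w⟩, hw0, hw⟩ := Subspace.exists_ne_zero_forall_notMem_span_singleton
    (by rwa [finrank_euclideanSpace_fin]) fun k => toLp 2 (Sum.elim υ u k)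
  obtain ⟨c, hc, hle⟩ := exists_lt_forall_norm_inner_sq_le (𝕜 := ℂ) _ hw
  set A : Mat2 d :=
    ((c * ‖toLp 2 w‖ ^ 2 : ℝ) : ℂ) • 1 - vecMulVec (vecTens w w) (star (vecTens w w))
  have hA : A.IsHermitian := isHermitian_smul_one_sub_vecMulVec _ _
  refine ⟨A, hA, fun h => ?_, fun i => ?_, fun j => ?_⟩
  · have hww := h w w
    rw [star_vecTens_dotProduct_mulVec_vecTens, Complex.zero_le_real,
      ← inner_self_re_eq_norm, inner_self_eq_norm_sq] at hww
    have hN : 0 < ‖toLp 2 w‖ ^ 2 := by positivity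
    nlinarith [mul_lt_mul_of_pos_right hc (pow_pos hN 3)]
  · refine PosSemidef.of_dotProduct_mulVec_nonneg (hA.blockFst _) fun x => ?_
    rw [star_dotProduct_blockFst_mulVec, star_vecTens_dotProduct_mulVec_vecTens,
      Complex.zero_le_real, sub_nonneg]
    exact norm_inner_sq_mul_norm_inner_sq_le (hle (.inl i)) _
  · refine PosSemidef.of_dotProduct_mulVec_nonneg (hA.blockSnd _) fun x => ?_
    rw [star_dotProduct_blockSnd_mulVec, star_vecTens_dotProduct_mulVec_vecTens,
      Complex.zero_le_real, sub_nonneg]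
    have h := norm_inner_sq_mul_norm_inner_sq_le (hle (.inr j)) (toLp 2 x)
    simp only [Sum.elim_inr] at h
    linear_combination h
end

section
/- Let X = ℝ^d and let A be a self-adjoint linear operator on X⊗X with matrix elements A_{ab,cd} in an orthonormal product basis, satisfying the partial transpose symmetry (id⊗t)A = A, where t is transposition on L(X) with respect to the chosen orthonormal basis. Then the real polynomial p(x,y) = Σ_{a,b,c,d} A_{ab,cd} x^a y^b x^c y^d in the variables x^1,…,x^d, y^1,…,y^d is a sum of squares of real polynomials if and only if A = B + (id⊗t)B for some positive semidefinite operator B on X⊗X. -/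
open scoped ComplexOrder Kronecker
open Matrix

variable {n : ℕ}

/-!
If a sum of squares `Σ Pᵢ²` is weighted homogeneous of degree `2k`, then every `Pᵢ` is
weighted homogeneous of degree `k`: the highest and the lowest graded pieces of `Σ Pᵢ²` are
sums of squares, which cannot vanish over a formally real ring. Applied to the `x`-degree and
to the `y`-degree of `p_A = Σ A_{ab,cd} xᵃ yᵇ xᶜ yᵈ`, this makes every `Pᵢ` a bilinear form
`Σ vᵢ(a,b) xᵃ yᵇ`, so `p_A = p_G` for the Gram matrix `G = Σ vᵢ vᵢᵀ ⪰ 0`; conversely every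
positive semidefinite matrix is such a Gram matrix. Since `p_B = p_{(id⊗t)B}`, and since
polarizing the quartic form shows that `p_A` determines `A` among symmetric matrices invariant
under `id⊗t`, `p_A = p_G` with `G ⪰ 0` amounts to `A = B + (id⊗t)B` with `B = G/2`.
-/

open Finset in
theorem IsFormallyReal.eq_zero_of_sum_sq_eq_zero {R ι : Type*} [CommRing R] [IsFormallyReal R]
    {s : Finset ι} {f : ι → R} (h : ∑ i ∈ s, f i ^ 2 = 0) : ∀ i ∈ s, f i = 0 := by
  classical
  induction s using Finset.induction with
  | empty => simp
  | insert a s ha ih =>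
    rw [sum_insert ha] at h
    have hsq : IsSumSq (∑ i ∈ s, f i ^ 2) := .sum_sq s f
    have hfa : IsSumSq (f a ^ 2) := (IsSquare.sq (f a)).isSumSq
    intro i hi
    rcases mem_insert.mp hi with rfl | hi
    · exact pow_eq_zero_iff two_ne_zero |>.mp (eq_zero_of_add_right hfa hsq h)
    · exact ih (eq_zero_of_add_left hfa hsq h) i hi

theorem IsSumSq.map {R S F : Type*} [Semiring R] [Semiring S] [FunLike F R S] [RingHomClass F R S]
    (f : F) {s : R} (hs : IsSumSq s) : IsSumSq (f s) := by
  induction hs with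
  | zero => simp
  | sq_add a _ ih => rw [map_add, map_mul]; exact .sq_add (f a) ih

instance {σ R : Type*} [CommRing R] [LinearOrder R] [IsStrictOrderedRing R] :
    IsFormallyReal (MvPolynomial σ R) :=
  .of_eq_zero_of_eq_zero_of_mul_self_add fun {s a} hs h => MvPolynomial.funext fun x => by
    have hx := congrArg (MvPolynomial.eval x) h
    rw [map_add, map_mul, map_zero] at hx
    simpa using mul_self_eq_zero.mp
      (le_antisymm (by linarith [(hs.map (MvPolynomial.eval x)).nonneg]) (mul_self_nonneg _))

namespace Polynomial
open Finset

theorem coeff_sq_add_self {R : Type*} [CommSemiring R] (q : R[X]) (j : ℕ)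
    (h : (∀ i < j, q.coeff i = 0) ∨ ∀ i, j < i → q.coeff i = 0) :
    (q ^ 2).coeff (j + j) = q.coeff j ^ 2 := by
  rw [sq, sq, coeff_mul, sum_eq_single (j, j) _ (by simp)]
  rintro ⟨a, b⟩ hab hne
  rw [HasAntidiagonal.mem_antidiagonal] at hab
  have : a < j ∧ j < b ∨ b < j ∧ j < a := by
    by_contra!
    exact hne (Prod.ext (by omega) (by omega))
  rcases h with h | h <;> rcases this with ⟨h1, h2⟩ | ⟨h1, h2⟩ <;> simp [*]

theorem coeff_eq_zero_of_sum_sq_eq_monomial {R ι : Type*} [CommRing R] [IsFormallyReal R]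
    {s : Finset ι} {q : ι → R[X]} {k : ℕ} {r : R}
    (h : ∑ i ∈ s, q i ^ 2 = monomial (2 * k) r) :
    ∀ i ∈ s, ∀ j ≠ k, (q i).coeff j = 0 := by
  have hcoeff (j : ℕ) (hj : j ≠ k)
      (hq : ∀ i ∈ s, (∀ l < j, (q i).coeff l = 0) ∨ ∀ l, j < l → (q i).coeff l = 0) :
      ∀ i ∈ s, (q i).coeff j = 0 := by
    refine IsFormallyReal.eq_zero_of_sum_sq_eq_zero ?_
    rw [← sum_congr rfl fun i hi => coeff_sq_add_self (q i) j (hq i hi), ← finsetSum_coeff, h,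
      coeff_monomial, if_neg (by omega)]
  have hlow : ∀ j < k, ∀ i ∈ s, (q i).coeff j = 0 := by
    intro j
    induction j using Nat.strong_induction_on with
    | _ j ih =>
      exact fun hj => hcoeff j (by omega) fun i hi => .inl fun l hl => ih l hl (by omega) i hi
  have hhigh : ∀ i ∈ s, (q i).natDegree ≤ k := by
    by_contra! hcon
    obtain ⟨i₀, hi₀, hmax⟩ := s.exists_max_image (fun i => (q i).natDegree) (by
      obtain ⟨i, hi, _⟩ := hcon; exact ⟨i, hi⟩)
    obtain ⟨i, hi, hik⟩ := hcon
    have hk : k < (q i₀).natDegree := hik.trans_le (hmax i hi)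
    have hlc := hcoeff _ hk.ne' (fun i hi => .inr fun l hl =>
      coeff_eq_zero_of_natDegree_lt ((hmax i hi).trans_lt hl)) i₀ hi₀
    exact (ne_zero_of_natDegree_gt hk) (leadingCoeff_eq_zero.mp hlc)
  intro i hi j hj
  rcases lt_or_gt_of_ne hj with hj | hj
  · exact hlow j hj i hi
  · exact coeff_eq_zero_of_natDegree_lt ((hhigh i hi).trans_lt hj)

end Polynomial

namespace MvPolynomial

variable {σ R : Type*} [CommSemiring R]

noncomputable def weightedScaling (w : σ → ℕ) :
    MvPolynomial σ R →ₐ[R] Polynomial (MvPolynomial σ R) :=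
  aeval fun i => Polynomial.monomial (w i) (X i)

theorem weightedScaling_monomial (w : σ → ℕ) (m : σ →₀ ℕ) (r : R) :
    weightedScaling w (monomial m r) = Polynomial.monomial (Finsupp.weight w m) (monomial m r) := by
  rw [weightedScaling, aeval_monomial, ← Polynomial.C_mul_X_pow_eq_monomial, monomial_eq]
  simp_rw [← Polynomial.C_mul_X_pow_eq_monomial, mul_pow, ← pow_mul, ← map_pow,
    Finsupp.prod_mul]
  rw [← map_finsuppProd, Finsupp.prod, Finsupp.prod, Finset.prod_pow_eq_pow_sum,
    Finsupp.weight_apply, Finsupp.sum, Polynomial.algebraMap_apply, algebraMap_eq, map_mul]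
  simp only [smul_eq_mul, mul_comm]
  ring

theorem coeff_weightedScaling (w : σ → ℕ) (p : MvPolynomial σ R) (k : ℕ) :
    (weightedScaling w p).coeff k = weightedHomogeneousComponent w k p := by
  classical
  induction p using MvPolynomial.induction_on' with
  | monomial m r =>
    ext m'
    rw [weightedScaling_monomial, Polynomial.coeff_monomial, coeff_weightedHomogeneousComponent]
    rcases eq_or_ne m m' with rfl | hm <;> split_ifs <;> simp [coeff_monomial, *]
  | add p q hp hq => simp [hp, hq]

theorem weightedScaling_of_isWeightedHomogeneous {w : σ → ℕ} {p : MvPolynomial σ R} {k : ℕ}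
    (hp : p.IsWeightedHomogeneous w k) : weightedScaling w p = Polynomial.monomial k p := by
  classical
  ext1 j
  rw [coeff_weightedScaling, weightedHomogeneousComponent_of_mem hp, Polynomial.coeff_monomial]
  rcases eq_or_ne j k with rfl | hj
  · simp
  · simp [hj, hj.symm]

theorem isWeightedHomogeneous_of_sum_sq {σ R ι : Type*} [CommRing R] [LinearOrder R]
    [IsStrictOrderedRing R] {w : σ → ℕ} {s : Finset ι} {P : ι → MvPolynomial σ R}
    {k : ℕ}
    (h : (∑ i ∈ s, P i ^ 2).IsWeightedHomogeneous w (2 * k)) :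
    ∀ i ∈ s, (P i).IsWeightedHomogeneous w k := by
  have hscaled : ∑ i ∈ s, weightedScaling w (P i) ^ 2 =
      Polynomial.monomial (2 * k) (∑ i ∈ s, P i ^ 2) := by
    simp_rw [← map_pow, ← map_sum]
    exact weightedScaling_of_isWeightedHomogeneous h
  intro i hi m hm
  by_contra hne
  have hcomp := Polynomial.coeff_eq_zero_of_sum_sq_eq_monomial hscaled i hi _ hne
  rw [coeff_weightedScaling] at hcomp
  exact hm (by simpa [coeff_weightedHomogeneousComponent] using congrArg (coeff m) hcomp)

end MvPolynomial

namespace Finsupp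

theorem exists_eq_single_inl_add_single_inr {α β : Type*} {m : α ⊕ β →₀ ℕ}
    (hx : weight (Sum.elim (fun _ => 1) (fun _ => 0)) m = 1)
    (hy : weight (Sum.elim (fun _ => 0) (fun _ => 1)) m = 1) :
    ∃ a b, m = single (Sum.inl a) 1 + single (Sum.inr b) 1 := by
  rw [← comapDomain_sumElim_comapDomain m] at hx hy ⊢
  simp only [weight_apply, sum_sumElim, Function.comp_def, Sum.elim_inl, Sum.elim_inr,
    smul_eq_mul, mul_one, mul_zero, sum_fun_zero, add_zero, zero_add] at hx hy
  obtain ⟨a, ha⟩ := (sum_eq_one_iff _).1 hx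
  obtain ⟨b, hb⟩ := (sum_eq_one_iff _).1 hy
  exact ⟨a, b, by rw [ha, hb, sumElim_single_single]⟩

theorem single_inl_add_single_inr_inj {α β : Type*} {a a' : α} {b b' : β} :
    single (Sum.inl a) 1 + single (Sum.inr b) 1 =
        single (Sum.inl a') (1 : ℕ) + single (Sum.inr b') 1 ↔ a = a' ∧ b = b' := by
  refine ⟨fun h => ?_, fun ⟨ha, hb⟩ => ha ▸ hb ▸ rfl⟩
  rw [← sumElim_single_single, ← sumElim_single_single] at h
  simpa only [sumFinsuppEquivProdFinsupp_apply, comapDomain_inl_sumElim, comapDomain_inr_sumElim,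
    Prod.mk.injEq, single_left_inj one_ne_zero] using congrArg sumFinsuppEquivProdFinsupp h

end Finsupp

section QuarticPoly

open MvPolynomial Finset

noncomputable def bilinPoly (v : Fin n × Fin n → ℝ) : MvPolynomial (Fin n ⊕ Fin n) ℝ :=
  ∑ q, C (v q) * X (Sum.inl q.1) * X (Sum.inr q.2)

theorem quarticPoly_eq_sum_pairs (M : RMat2 n) : quarticPoly M =
    ∑ p, ∑ q,
      C (M p q) * X (Sum.inl p.1) * X (Sum.inr p.2) * X (Sum.inl q.1) * X (Sum.inr q.2) := by
  simp [quarticPoly, Fintype.sum_prod_type]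

theorem quarticPoly_add (M N : RMat2 n) : quarticPoly (M + N) = quarticPoly M + quarticPoly N := by
  simp only [quarticPoly, Matrix.add_apply, map_add, add_mul, sum_add_distrib]

theorem quarticPoly_sub (M N : RMat2 n) : quarticPoly (M - N) = quarticPoly M - quarticPoly N :=
  map_sub (AddMonoidHom.mk' quarticPoly quarticPoly_add) M N

theorem quarticPoly_ptrans (M : RMat2 n) : quarticPoly (ptrans M) = quarticPoly M := by
  rw [quarticPoly_eq_sum_pairs, quarticPoly_eq_sum_pairs, ← Fintype.sum_prod_type',
    ← Fintype.sum_prod_type']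
  refine Fintype.sum_equiv (Equiv.mk (fun pq => ((pq.1.1, pq.2.2), (pq.2.1, pq.1.2)))
    (fun pq => ((pq.1.1, pq.2.2), (pq.2.1, pq.1.2))) (fun _ => rfl) fun _ => rfl) _ _ ?_
  rintro ⟨⟨a, b⟩, c, e⟩
  simp only [ptrans, of_apply, Equiv.coe_fn_mk]
  ring

theorem quarticPoly_vecMulVec_self (v : Fin n × Fin n → ℝ) :
    quarticPoly (vecMulVec v v) = bilinPoly v ^ 2 := by
  rw [quarticPoly_eq_sum_pairs, bilinPoly, sq, sum_mul_sum]
  refine sum_congr rfl fun p _ => sum_congr rfl fun q _ => ?_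
  rw [vecMulVec_apply, map_mul]
  ring

theorem quarticPoly_sum_vecMulVec_self {m : ℕ} (v : Fin m → Fin n × Fin n → ℝ) :
    quarticPoly (∑ i, vecMulVec (v i) (v i)) = ∑ i, bilinPoly (v i) ^ 2 :=
  (map_sum (AddMonoidHom.mk' quarticPoly quarticPoly_add) _ univ).trans
    (sum_congr rfl fun i _ => quarticPoly_vecMulVec_self (v i))

theorem isWeightedHomogeneous_quarticPoly (M : RMat2 n) (i j : ℕ) :
    (quarticPoly M).IsWeightedHomogeneous (Sum.elim (fun _ => i) (fun _ => j)) (2 * (i + j)) := by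
  refine IsWeightedHomogeneous.sum _ _ _ fun a _ => .sum _ _ _ fun b _ => .sum _ _ _ fun c _ =>
    .sum _ _ _ fun e _ => ?_
  convert ((((isWeightedHomogeneous_C _ _).mul (isWeightedHomogeneous_X ℝ _ _)).mul
    (isWeightedHomogeneous_X ℝ _ _)).mul (isWeightedHomogeneous_X ℝ _ _)).mul
    (isWeightedHomogeneous_X ℝ _ _) using 1
  simp only [Sum.elim_inl, Sum.elim_inr]
  ring

theorem coeff_bilinPoly (v : Fin n × Fin n → ℝ) (m : Fin n ⊕ Fin n →₀ ℕ) :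
    coeff m (bilinPoly v) =
      ∑ q, if Finsupp.single (Sum.inl q.1) 1 + Finsupp.single (Sum.inr q.2) 1 = m then v q
        else 0 := by
  simp [bilinPoly, coeff_sum, X, C_mul_monomial, monomial_mul, coeff_monomial]

theorem eq_bilinPoly_of_isWeightedHomogeneous {P : MvPolynomial (Fin n ⊕ Fin n) ℝ}
    (hx : P.IsWeightedHomogeneous (Sum.elim (fun _ => 1) (fun _ => 0)) 1)
    (hy : P.IsWeightedHomogeneous (Sum.elim (fun _ => 0) (fun _ => 1)) 1) :
    P = bilinPoly fun q =>
      coeff (Finsupp.single (Sum.inl q.1) 1 + Finsupp.single (Sum.inr q.2) 1) P := by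
  ext m
  rw [coeff_bilinPoly]
  by_cases hm : coeff m P = 0
  · rw [hm, sum_eq_zero]
    intro q _
    split_ifs with hq
    · rw [hq, hm]
    · rfl
  · obtain ⟨a, b, rfl⟩ := Finsupp.exists_eq_single_inl_add_single_inr (hx hm) (hy hm)
    simp_rw [Finsupp.single_inl_add_single_inr_inj]
    rw [Fintype.sum_eq_single (a, b) fun q hq => if_neg fun h => hq (Prod.ext h.1 h.2)]
    simp

def quarticForm (M : RMat2 n) (x y x' y' : Fin n → ℝ) : ℝ :=
  ∑ p, ∑ q, M p q * (x p.1 * y p.2) * (x' q.1 * y' q.2)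

theorem eval_quarticPoly (M : RMat2 n) (z : Fin n ⊕ Fin n → ℝ) :
    eval z (quarticPoly M) =
      quarticForm M (z ∘ Sum.inl) (z ∘ Sum.inr) (z ∘ Sum.inl) (z ∘ Sum.inr) := by
  rw [quarticPoly_eq_sum_pairs, quarticForm]
  simp only [map_sum, map_mul, eval_C, eval_X, Function.comp_apply]
  refine sum_congr rfl fun p _ => sum_congr rfl fun q _ => by ring

theorem quarticForm_self_eq_zero {M : RMat2 n} (hM : quarticPoly M = 0) (x y : Fin n → ℝ) :
    quarticForm M x y x y = 0 := by
  simpa [eval_quarticPoly] using congrArg (eval (Sum.elim x y)) hM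

theorem quarticForm_polarization (M : RMat2 n) (u u' v v' : Fin n → ℝ) :
    let F x y := quarticForm M x y x y
    quarticForm M u v u' v' + quarticForm M u v' u' v + quarticForm M u' v u v' +
        quarticForm M u' v' u v =
      F (u + u') (v + v') - F (u + u') v - F (u + u') v' - F u (v + v') - F u' (v + v') +
        F u v + F u v' + F u' v + F u' v' := by
  simp only [quarticForm, ← sum_add_distrib, ← sum_sub_distrib]
  refine sum_congr rfl fun p _ => sum_congr rfl fun q _ => ?_
  simp only [Pi.add_apply]
  ring

theorem quarticForm_single (M : RMat2 n) (a b c e : Fin n) :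
    quarticForm M (Pi.single a 1) (Pi.single b 1) (Pi.single c 1) (Pi.single e 1) =
      M (a, b) (c, e) := by
  simp [quarticForm, Fintype.sum_prod_type, Pi.single_apply]

theorem ptrans_add (M N : RMat2 n) : ptrans (M + N) = ptrans M + ptrans N := rfl

theorem ptrans_sub (M N : RMat2 n) : ptrans (M - N) = ptrans M - ptrans N := rfl

theorem Matrix.IsSymm.ptrans {M : RMat2 n} (hM : M.IsSymm) : (ptrans M).IsSymm :=
  IsSymm.ext fun _ _ => hM.apply _ _

theorem eq_zero_of_quarticPoly_eq_zero {M : RMat2 n} (hs : M.IsSymm) (hp : ptrans M = M)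
    (hM : quarticPoly M = 0) : M = 0 := by
  ext ⟨a, b⟩ ⟨c, e⟩
  have h := quarticForm_polarization M (Pi.single a 1) (Pi.single c 1) (Pi.single b 1)
    (Pi.single e 1)
  simp only [quarticForm_single, quarticForm_self_eq_zero hM] at h
  have h₁ : M (a, e) (c, b) = M (a, b) (c, e) := congrFun (congrFun hp (a, b)) (c, e)
  have h₂ : M (c, b) (a, e) = M (a, e) (c, b) := hs.apply _ _
  have h₃ : M (c, e) (a, b) = M (a, b) (c, e) := hs.apply _ _
  rw [Matrix.zero_apply]
  linarith

theorem eq_of_quarticPoly_eq {M N : RMat2 n} (hM : M.IsSymm) (hM' : ptrans M = M)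
    (hN : N.IsSymm) (hN' : ptrans N = N) (h : quarticPoly M = quarticPoly N) : M = N :=
  sub_eq_zero.mp <| eq_zero_of_quarticPoly_eq_zero (hM.sub hN) (by rw [ptrans_sub, hM', hN'])
    (by rw [quarticPoly_sub, h, sub_self])

theorem exists_sum_sq_quarticPoly_iff (A : RMat2 n) :
    (∃ (m : ℕ) (P : Fin m → MvPolynomial (Fin n ⊕ Fin n) ℝ),
        quarticPoly A = ∑ i, P i ^ 2) ↔
      ∃ G : RMat2 n, G.PosSemidef ∧ quarticPoly G = quarticPoly A := by
  constructor
  · rintro ⟨m, P, hP⟩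
    have hbilin (i : Fin m) := eq_bilinPoly_of_isWeightedHomogeneous
      (isWeightedHomogeneous_of_sum_sq (hP ▸ isWeightedHomogeneous_quarticPoly A 1 0) i
        (Finset.mem_univ i))
      (isWeightedHomogeneous_of_sum_sq (hP ▸ isWeightedHomogeneous_quarticPoly A 0 1) i
        (Finset.mem_univ i))
    set v : Fin m → Fin n × Fin n → ℝ := fun i q =>
      coeff (Finsupp.single (Sum.inl q.1) 1 + Finsupp.single (Sum.inr q.2) 1) (P i)
    refine ⟨∑ i, vecMulVec (v i) (v i),
      posSemidef_iff_eq_sum_vecMulVec.mpr ⟨m, v, by simp⟩, ?_⟩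
    rw [quarticPoly_sum_vecMulVec_self, hP]
    exact Finset.sum_congr rfl fun i _ => by rw [← hbilin i]
  · rintro ⟨G, hG, hGA⟩
    obtain ⟨m, v, rfl⟩ := posSemidef_iff_eq_sum_vecMulVec.mp hG
    refine ⟨m, fun i => bilinPoly (v i), ?_⟩
    rw [← hGA, ← quarticPoly_sum_vecMulVec_self]
    simp

theorem exists_posSemidef_quarticPoly_eq_iff {A : RMat2 n} (hA : A.IsSymm) (hA' : ptrans A = A) :
    (∃ G : RMat2 n, G.PosSemidef ∧ quarticPoly G = quarticPoly A) ↔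
      ∃ B : RMat2 n, B.PosSemidef ∧ A = B + ptrans B := by
  constructor
  · rintro ⟨G, hG, hGA⟩
    have hB : ((2⁻¹ : ℝ) • G).PosSemidef := hG.smul (by norm_num)
    have hBs : ((2⁻¹ : ℝ) • G).IsSymm := isHermitian_iff_isSymm.mp hB.isHermitian
    refine ⟨_, hB, eq_of_quarticPoly_eq hA hA' (hBs.add hBs.ptrans)
      (by rw [ptrans_add, add_comm]; rfl) ?_⟩
    rw [← hGA, quarticPoly_add, quarticPoly_ptrans, ← quarticPoly_add, ← add_smul]
    norm_num
  · rintro ⟨B, hB, rfl⟩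
    exact ⟨B + B, hB.add hB, by rw [quarticPoly_add, quarticPoly_add, quarticPoly_ptrans]⟩

end QuarticPoly

theorem stmt16_general (d : ℕ) (A : RMat2 d)
    (hsymm : A.IsSymm) (hpt : ptrans A = A) :
    (∃ (n : ℕ) (P : Fin n → MvPolynomial (Fin d ⊕ Fin d) ℝ),
        quarticPoly A = ∑ i, (P i) ^ 2) ↔
      ∃ B : RMat2 d, B.PosSemidef ∧ A = B + ptrans B := by
  rw [exists_sum_sq_quarticPoly_iff, exists_posSemidef_quarticPoly_eq_iff hsymm hpt]

/-- for a symmetric operator `A` on `X ⊗ X` (`X = ℝ^d`) invariant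
under partial transposition, the polynomial `Σ A_{ab,cd} x^a y^b x^c y^d` is a
sum of squares of real polynomials iff `A = B + (id⊗t)B` for some positive
semidefinite `B`. -/
theorem stmt16 (d : ℕ) (hd : 0 < d) (A : RMat2 d)
    (hsymm : A.IsSymm) (hpt : ptrans A = A) :
    (∃ (n : ℕ) (P : Fin n → MvPolynomial (Fin d ⊕ Fin d) ℝ),
        quarticPoly A = ∑ i, (P i) ^ 2) ↔
      ∃ B : RMat2 d, B.PosSemidef ∧ A = B + ptrans B :=
  stmt16_general d A hsymm hpt
end

section
/- Let ρ and σ be separable states on V⊗V (V = ℂ^d) of lengths l₁ and l₂ respectively. Then there exist a real number r with 0 ≤ r ≤ 1 and a separable state τ on V⊗V of length at most min(l₁, l₂) such that ρ⊙σ = r·τ. -/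
open scoped ComplexOrder Kronecker
open Matrix

variable {n : ℕ}

/-!
Write `ρ = ∑ᵢ Aᵢ ⊗ Bᵢ` and `σ = ∑ⱼ Cⱼ ⊗ Dⱼ` with `l₁`, resp. `l₂`, positive semidefinite
factors. Then `ρ ⊙ σ = ∑ᵢⱼ tᵢⱼ Aᵢ ⊗ Dⱼ` with `tᵢⱼ = tr (Bᵢ Cⱼᵀ)`, and `0 ≤ tᵢⱼ ≤ tr Bᵢ · tr Cⱼ`.
Grouping the terms as `∑ᵢ Aᵢ ⊗ (∑ⱼ tᵢⱼ Dⱼ)` or as `∑ⱼ (∑ᵢ tᵢⱼ Aᵢ) ⊗ Dⱼ` shows that `ρ ⊙ σ` is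
separable of length at most `l₁` and at most `l₂`, and the bound on `tᵢⱼ` gives
`r = tr (ρ ⊙ σ) ≤ tr ρ · tr σ = 1`. Hence `τ = r⁻¹ (ρ ⊙ σ)` works; if `r = 0`, then `ρ ⊙ σ = 0`
and any product state will do.
-/

namespace Matrix.PosSemidef

variable {ι : Type*} [Fintype ι] {A B : Matrix ι ι ℂ}

theorem trace_mul_nonneg (hA : A.PosSemidef) (hB : B.PosSemidef) : 0 ≤ (A * B).trace := by
  classical
  open scoped MatrixOrder in
  obtain ⟨X, rfl⟩ := CStarAlgebra.nonneg_iff_eq_star_mul_self.mp hB.nonneg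
  rw [← Matrix.mul_assoc, trace_mul_cycle]
  exact (hA.mul_mul_conjTranspose_same X).trace_nonneg

open scoped MatrixOrder in
theorem le_trace_smul_one [DecidableEq ι] (hA : A.PosSemidef) :
    A ≤ A.trace • (1 : Matrix ι ι ℂ) := by
  have hle : ∀ x ∈ spectrum ℝ A, x ≤ A.trace.re := by
    rw [hA.isHermitian.spectrum_real_eq_range_eigenvalues]
    rintro _ ⟨i, rfl⟩
    rw [hA.isHermitian.trace_eq_sum_eigenvalues]
    simpa using Finset.single_le_sum (fun j _ => hA.eigenvalues_nonneg j) (Finset.mem_univ i)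
  have h := le_algebraMap_of_spectrum_le hle hA.isHermitian
  rwa [Algebra.algebraMap_eq_smul_one, ← Complex.coe_smul,
    ← Complex.eq_re_of_ofReal_le (Complex.ofReal_zero ▸ hA.trace_nonneg)] at h

theorem trace_mul_le (hA : A.PosSemidef) (hB : B.PosSemidef) :
    (A * B).trace ≤ A.trace * B.trace := by
  classical
  have h := hA.trace_mul_nonneg (Matrix.le_iff.mp hB.le_trace_smul_one)
  rwa [Matrix.mul_sub, trace_sub, Matrix.mul_smul, Matrix.mul_one, trace_smul, smul_eq_mul,
    mul_comm, sub_nonneg] at h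

theorem ofReal_re_trace (hA : A.PosSemidef) : (A.trace.re : ℂ) = A.trace :=
  (Complex.eq_re_of_ofReal_le (Complex.ofReal_zero ▸ hA.trace_nonneg)).symm

theorem re_trace_nonneg (hA : A.PosSemidef) : 0 ≤ A.trace.re :=
  (Complex.nonneg_iff.mp hA.trace_nonneg).1

theorem re_trace_smul_inv_smul (hA : A.PosSemidef) : A.trace.re • A.trace.re⁻¹ • A = A := by
  by_cases h : A.trace.re = 0
  · have hA0 : A = 0 :=
      hA.trace_eq_zero_iff.mp (by rw [← hA.ofReal_re_trace, h, Complex.ofReal_zero])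
    simp [hA0]
  · exact smul_inv_smul₀ h A

end Matrix.PosSemidef

theorem odot_apply (A B : Mat2 n) (p q : Fin n × Fin n) :
    odot A B p q = ∑ γ, ∑ δ, B (γ, p.2) (δ, q.2) * A (p.1, γ) (q.1, δ) := by
  simp [odot, Jmat, Jinv, Matrix.single_apply, ite_and]

theorem odot_sum_left {ι : Type*} [Fintype ι] (A : ι → Mat2 n) (B : Mat2 n) :
    odot (∑ i, A i) B = ∑ i, odot (A i) B := by
  ext p q
  simp only [odot_apply, Matrix.sum_apply, Finset.mul_sum]
  exact (Finset.sum_congr rfl fun _ _ => Finset.sum_comm).trans Finset.sum_comm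

theorem odot_sum_right {ι : Type*} [Fintype ι] (A : Mat2 n) (B : ι → Mat2 n) :
    odot A (∑ i, B i) = ∑ i, odot A (B i) := by
  ext p q
  simp only [odot_apply, Matrix.sum_apply, Finset.sum_mul]
  exact (Finset.sum_congr rfl fun _ _ => Finset.sum_comm).trans Finset.sum_comm

theorem odot_kronecker (A B C D : Mat n) :
    odot (A ⊗ₖ B) (C ⊗ₖ D) = (B * Cᵀ).trace • (A ⊗ₖ D) := by
  ext p q
  simp only [odot_apply, kroneckerMap_apply, Matrix.smul_apply, smul_eq_mul, trace, diag_apply,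
    mul_apply, transpose_apply, Finset.sum_mul]
  exact Finset.sum_congr rfl fun _ _ => Finset.sum_congr rfl fun _ _ => by ring

theorem odot_sum_kronecker {ι κ : Type*} [Fintype ι] [Fintype κ] (A B : ι → Mat n)
    (C D : κ → Mat n) :
    odot (∑ i, A i ⊗ₖ B i) (∑ j, C j ⊗ₖ D j) =
      ∑ i, ∑ j, (B i * (C j)ᵀ).trace • (A i ⊗ₖ D j) := by
  simp only [odot_sum_left, odot_sum_right, odot_kronecker]
  exact Finset.sum_comm

section Separable

variable {h d : ℕ} {ρ M : MatH h d} {l m : ℕ}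

theorem HasSepLen.posSemidef (hρ : HasSepLen h d ρ l) : ρ.PosSemidef := by
  obtain ⟨A, B, hA, hB, rfl⟩ := hρ
  exact posSemidef_sum _ fun i _ => (hA i).kronecker (hB i)

theorem HasSepLen.smul (hρ : HasSepLen h d ρ l) {c : ℝ} (hc : 0 ≤ c) :
    HasSepLen h d (c • ρ) l := by
  obtain ⟨A, B, hA, hB, rfl⟩ := hρ
  refine ⟨fun i => c • A i, B, fun i => (hA i).smul hc, hB, ?_⟩
  simp only [Finset.smul_sum, smul_kronecker]

theorem HasSepLen.mono (hρ : HasSepLen h d ρ l) (hlm : l ≤ m) : HasSepLen h d ρ m := by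
  obtain ⟨A, B, hA, hB, rfl⟩ := hρ
  have hinj := Fin.castLE_injective hlm
  have hext : ∀ {k} (F : Fin l → Matrix (Fin k) (Fin k) ℂ), (∀ i, (F i).PosSemidef) →
      ∀ j, (Function.extend (Fin.castLE hlm) F 0 j).PosSemidef := by
    intro k F hF j
    by_cases hj : ∃ i, Fin.castLE hlm i = j
    · obtain ⟨i, rfl⟩ := hj
      simpa [hinj.extend_apply] using hF i
    · simpa [Function.extend_apply' _ _ _ hj] using PosSemidef.zero
  refine ⟨Function.extend (Fin.castLE hlm) A 0, Function.extend (Fin.castLE hlm) B 0,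
    hext A hA, hext B hB, ?_⟩
  refine Fintype.sum_of_injective _ hinj _ _ (fun j hj => ?_) (fun i => ?_)
  · simp [Function.extend_apply' _ _ _ hj]
  · simp [hinj.extend_apply]

theorem IsSepState.hasSepLen (hρ : IsSepState h d ρ) : ∃ l, HasSepLen h d ρ l := by
  obtain ⟨l, p, A, B, hp, -, hA, hB, rfl⟩ := hρ
  refine ⟨l, fun i => p i • A i, B, fun i => (hA i).1.smul (hp i).le, fun i => (hB i).1, ?_⟩
  simp only [Complex.coe_smul, smul_kronecker]

theorem IsSepState.hasSepLen_sepLength (hρ : IsSepState h d ρ) :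
    HasSepLen h d ρ (sepLength h d ρ) :=
  Nat.sInf_mem hρ.hasSepLen

theorem sepLength_le (hρ : HasSepLen h d ρ l) : sepLength h d ρ ≤ l :=
  Nat.sInf_le hρ

theorem IsState.ne_zero_of_hasSepLen (hρ : IsState ρ) (hl : HasSepLen h d ρ l) : l ≠ 0 := by
  rintro rfl
  obtain ⟨A, B, -, -, rfl⟩ := hl
  simpa using hρ.2

theorem isSepState_of_sum_smul_kronecker {ι : Type*} [Fintype ι] (p : ι → ℝ)
    (A : ι → Matrix (Fin h) (Fin h) ℂ) (B : ι → Matrix (Fin d) (Fin d) ℂ)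
    (hp : ∀ i, 0 ≤ p i) (hsum : ∑ i, p i = 1)
    (hA : ∀ i, p i ≠ 0 → (A i).PosSemidef ∧ (A i).trace = 1)
    (hB : ∀ i, p i ≠ 0 → (B i).PosSemidef ∧ (B i).trace = 1)
    (hρ : ρ = ∑ i, (p i : ℂ) • (A i ⊗ₖ B i)) : IsSepState h d ρ := by
  set e := (Fintype.equivFin {i // p i ≠ 0}).symm
  have hinj : Function.Injective (Subtype.val ∘ e) := Subtype.val_injective.comp e.injective
  have hrange : ∀ i ∉ Set.range (Subtype.val ∘ e), p i = 0 := fun i hi => by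
    by_contra hpi
    exact hi ⟨e.symm ⟨i, hpi⟩, by simp⟩
  refine ⟨_, fun j => p (e j), fun j => A (e j), fun j => B (e j),
    fun j => (hp _).lt_of_ne' (e j).2, ?_, fun j => hA _ (e j).2, fun j => hB _ (e j).2, ?_⟩
  · rw [← hsum]
    exact Fintype.sum_of_injective _ hinj _ _ hrange fun _ => rfl
  · rw [hρ]
    exact (Fintype.sum_of_injective _ hinj _ _ (fun i hi => by simp [hrange i hi])
      fun _ => rfl).symm

theorem IsState.isSepState_of_hasSepLen (hρ : IsState ρ) (hl : HasSepLen h d ρ l) :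
    IsSepState h d ρ := by
  obtain ⟨A, B, hA, hB, rfl⟩ := hl
  set a := fun i => (A i).trace.re
  set b := fun i => (B i).trace.re
  refine isSepState_of_sum_smul_kronecker (fun i => a i * b i) (fun i => (a i)⁻¹ • A i)
    (fun i => (b i)⁻¹ • B i) (fun i => mul_nonneg (hA i).re_trace_nonneg (hB i).re_trace_nonneg)
    ?_ (fun i hi => ?_) (fun i hi => ?_) ?_
  · have hterm : ∀ i, (A i ⊗ₖ B i).trace = ((a i * b i : ℝ) : ℂ) := fun i => by
      rw [trace_kronecker, Complex.ofReal_mul, (hA i).ofReal_re_trace, (hB i).ofReal_re_trace]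
    have htr := hρ.2
    simp only [trace_sum, hterm] at htr
    exact_mod_cast htr
  · refine ⟨(hA i).smul (inv_nonneg.mpr (hA i).re_trace_nonneg), ?_⟩
    rw [trace_smul, ← (hA i).ofReal_re_trace, Complex.real_smul, ← Complex.ofReal_mul,
      inv_mul_cancel₀ (left_ne_zero_of_mul hi), Complex.ofReal_one]
  · refine ⟨(hB i).smul (inv_nonneg.mpr (hB i).re_trace_nonneg), ?_⟩
    rw [trace_smul, ← (hB i).ofReal_re_trace, Complex.real_smul, ← Complex.ofReal_mul,
      inv_mul_cancel₀ (right_ne_zero_of_mul hi), Complex.ofReal_one]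
  · refine Finset.sum_congr rfl fun i _ => ?_
    rw [Complex.coe_smul, mul_smul, ← kronecker_smul, ← smul_kronecker,
      (hA i).re_trace_smul_inv_smul, (hB i).re_trace_smul_inv_smul]

theorem exists_isState_smul_eq (hh : 0 < h) (hd : 0 < d) (hM : M.PosSemidef) :
    ∃ τ, IsState τ ∧ M = (M.trace.re : ℂ) • τ ∧
      ∀ l ≠ 0, HasSepLen h d M l → HasSepLen h d τ l := by
  set r := M.trace.re
  have htr : M.trace = r := hM.ofReal_re_trace.symm
  have hr0 : 0 ≤ r := hM.re_trace_nonneg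
  by_cases hr : r = 0
  · have hM0 : M = 0 := hM.trace_eq_zero_iff.mp (by rw [htr, hr, Complex.ofReal_zero])
    set c : ℝ := (h * d : ℝ)⁻¹
    have hc : 0 ≤ c := by positivity
    refine ⟨(c • 1 : Matrix (Fin h) (Fin h) ℂ) ⊗ₖ 1, ⟨?_, ?_⟩, by simp [hM0, hr],
      fun l hl _ => ?_⟩
    · exact (PosSemidef.one.smul hc).kronecker PosSemidef.one
    · rw [trace_kronecker, trace_smul, trace_one, trace_one, Fintype.card_fin, Fintype.card_fin,
        Complex.real_smul]
      simp only [c, Complex.ofReal_inv, Complex.ofReal_mul, Complex.ofReal_natCast]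
      field_simp
    · exact HasSepLen.mono ⟨fun _ => c • 1, fun _ => 1, fun _ => PosSemidef.one.smul hc,
        fun _ => PosSemidef.one, by simp⟩ (Nat.one_le_iff_ne_zero.mpr hl)
  · refine ⟨r⁻¹ • M, ⟨hM.smul (inv_nonneg.mpr hr0), ?_⟩, ?_,
      fun l _ hl => hl.smul (inv_nonneg.mpr hr0)⟩
    · rw [trace_smul, htr, Complex.real_smul, ← Complex.ofReal_mul, inv_mul_cancel₀ hr,
        Complex.ofReal_one]
    · rw [Complex.coe_smul, smul_inv_smul₀ hr]

end Separable

section SeparableOdot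

variable {ρ σ : Mat2 n} {l m : ℕ}

theorem HasSepLen.odot_left (hρ : HasSepLen n n ρ l) (hσ : HasSepLen n n σ m) :
    HasSepLen n n (odot ρ σ) l := by
  obtain ⟨A, B, hA, hB, rfl⟩ := hρ
  obtain ⟨C, D, hC, hD, rfl⟩ := hσ
  refine ⟨A, fun i => ∑ j, (B i * (C j)ᵀ).trace • D j, hA,
    fun i => posSemidef_sum _ fun j _ => (hD j).smul ((hB i).trace_mul_nonneg (hC j).transpose),
    ?_⟩
  rw [odot_sum_kronecker]
  refine Finset.sum_congr rfl fun i _ => ?_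
  ext p q
  simp [Matrix.sum_apply, Finset.mul_sum, mul_left_comm]

theorem HasSepLen.odot_right (hρ : HasSepLen n n ρ l) (hσ : HasSepLen n n σ m) :
    HasSepLen n n (odot ρ σ) m := by
  obtain ⟨A, B, hA, hB, rfl⟩ := hρ
  obtain ⟨C, D, hC, hD, rfl⟩ := hσ
  refine ⟨fun j => ∑ i, (B i * (C j)ᵀ).trace • A i, D,
    fun j => posSemidef_sum _ fun i _ => (hA i).smul ((hB i).trace_mul_nonneg (hC j).transpose),
    hD, ?_⟩
  rw [odot_sum_kronecker, Finset.sum_comm]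
  refine Finset.sum_congr rfl fun j _ => ?_
  ext p q
  simp [Matrix.sum_apply, Finset.sum_mul, mul_assoc]

theorem trace_odot_le (hρ : HasSepLen n n ρ l) (hσ : HasSepLen n n σ m) :
    (odot ρ σ).trace ≤ ρ.trace * σ.trace := by
  obtain ⟨A, B, hA, hB, rfl⟩ := hρ
  obtain ⟨C, D, hC, hD, rfl⟩ := hσ
  simp only [odot_sum_kronecker, trace_sum, trace_smul, trace_kronecker, smul_eq_mul,
    Finset.sum_mul_sum]
  refine Finset.sum_le_sum fun i _ => Finset.sum_le_sum fun j _ => ?_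
  calc (B i * (C j)ᵀ).trace * ((A i).trace * (D j).trace)
      ≤ ((B i).trace * (C j).trace) * ((A i).trace * (D j).trace) := by
        refine mul_le_mul_of_nonneg_right ?_ (mul_nonneg (hA i).trace_nonneg (hD j).trace_nonneg)
        simpa using (hB i).trace_mul_le (hC j).transpose
    _ = (A i).trace * (B i).trace * ((C j).trace * (D j).trace) := by ring

end SeparableOdot

/-- if `ρ`, `σ` are separable states on `V ⊗ V` of lengths `l₁`,
`l₂`, then `ρ ⊙ σ = r • τ` for some `0 ≤ r ≤ 1` and some separable state `τ` of
length at most `min l₁ l₂`. -/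
theorem stmt17 (d : ℕ) (hd : 0 < d) (ρ σ : Mat2 d) (l₁ l₂ : ℕ)
    (hρ : IsState ρ) (hρsep : IsSepState d d ρ) (hl₁ : sepLength d d ρ = l₁)
    (hσ : IsState σ) (hσsep : IsSepState d d σ) (hl₂ : sepLength d d σ = l₂) :
    ∃ (r : ℝ) (τ : Mat2 d), 0 ≤ r ∧ r ≤ 1 ∧
      IsState τ ∧ IsSepState d d τ ∧ sepLength d d τ ≤ min l₁ l₂ ∧
      odot ρ σ = (r : ℂ) • τ := by
  have h₁ : HasSepLen d d ρ l₁ := hl₁ ▸ hρsep.hasSepLen_sepLength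
  have h₂ : HasSepLen d d σ l₂ := hl₂ ▸ hσsep.hasSepLen_sepLength
  have hM₁ := h₁.odot_left h₂
  obtain ⟨τ, hτ, hMτ, hlen⟩ := exists_isState_smul_eq hd hd hM₁.posSemidef
  have hτ₁ := hlen l₁ (hρ.ne_zero_of_hasSepLen h₁) hM₁
  have hτ₂ := hlen l₂ (hσ.ne_zero_of_hasSepLen h₂) (h₁.odot_right h₂)
  have htr : (odot ρ σ).trace ≤ 1 := by simpa [hρ.2, hσ.2] using trace_odot_le h₁ h₂
  exact ⟨_, τ, hM₁.posSemidef.re_trace_nonneg, by simpa using (Complex.le_def.mp htr).1, hτ,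
    hτ.isSepState_of_hasSepLen hτ₁, le_min (sepLength_le hτ₁) (sepLength_le hτ₂), hMτ⟩
end

section
/- Let E₁ = diag(1,0,1,0), E₂ = diag(0,1,0,1), E₃ = diag(1,1,0,0), E₄ = diag(0,0,1,1), regarded as linear operators on ℂ⁴, and let ρ = (1/16)·Σ_{i=1}^4 E_i⊗E_i, an operator on ℂ⁴⊗ℂ⁴. Then ρ is a separable state whose length equals 4 and whose Schmidt rank equals 3. -/
open scoped ComplexOrder Kronecker
open Matrix

variable {n : ℕ}

/-- The diagonal matrices `E₁, E₂, E₃, E₄` of the example. -/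
noncomputable def Ediag : Fin 4 → Matrix (Fin 4) (Fin 4) ℂ :=
  ![Matrix.diagonal ![1, 0, 1, 0], Matrix.diagonal ![0, 1, 0, 1],
    Matrix.diagonal ![1, 1, 0, 0], Matrix.diagonal ![0, 0, 1, 1]]

/-- The state `ρ = (1/16) Σ_{i=1}^4 E_i ⊗ E_i` on `ℂ⁴ ⊗ ℂ⁴`. -/
noncomputable def rhoExample : MatH 4 4 :=
  (1 / 16 : ℂ) • ∑ i : Fin 4, Ediag i ⊗ₖ Ediag i

/-!
The entries `16 ρ_{(x,y),(x,y)}` form the matrix `M = [[2,1,1,0],[1,2,0,1],[1,0,2,1],[0,1,1,2]]`,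
and a decomposition `ρ = Σ_{i<l} A_i ⊗ B_i` factors `M / 16 = P Q` through `ℂ^l`, with
`P_{xi} = (A_i)_{xx}` and `Q_{iy} = (B_i)_{yy}`. Hence the Schmidt rank is at least `rank M = 3`,
which is attained because `E₁ + E₂ = E₃ + E₄`. When the `A_i, B_i` are positive semidefinite,
`P` and `Q` are nonnegative while `M` vanishes exactly on the antidiagonal, so the supports of the
four rows of `P` form an antichain of subsets of `Fin l`; by Sperner's theorem `l ≥ 4`.
-/

namespace Matrix

variable {m n ι R : Type*}

def kronDiag (ρ : Matrix (m × n) (m × n) R) : Matrix m n R := of fun x y => ρ (x, y) (x, y)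

theorem kronDiag_sum_kronecker [Fintype ι] [CommSemiring R] (A : ι → Matrix m m R)
    (B : ι → Matrix n n R) :
    kronDiag (∑ i, A i ⊗ₖ B i) = (of fun x i => A i x x) * (of fun i y => B i y y) := by
  ext x y
  simp [kronDiag, mul_apply, sum_apply, kroneckerMap_apply]

theorem rank_kronDiag_sum_kronecker_le [Fintype ι] [Fintype n] [CommRing R]
    [StrongRankCondition R] (A : ι → Matrix m m R) (B : ι → Matrix n n R) :
    (kronDiag (∑ i, A i ⊗ₖ B i)).rank ≤ Fintype.card ι := by
  rw [kronDiag_sum_kronecker]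
  exact (rank_mul_le_left _ _).trans (rank_le_card_width _)

/-- The row supports of `P` form an antichain in `Finset ι`, so Sperner's theorem applies. -/
theorem card_le_choose_of_nonneg_mul [Fintype m] [Fintype ι] [CommSemiring R] [PartialOrder R]
    [IsOrderedRing R] [NoZeroDivisors R] (P : Matrix m ι R) (Q : Matrix ι m R)
    (hP : ∀ x i, 0 ≤ P x i) (hQ : ∀ i y, 0 ≤ Q i y) {σ : m → m} (hσ : σ.Injective)
    (hzero : ∀ x, (P * Q) x (σ x) = 0) (hsupp : ∀ x y, y ≠ σ x → (P * Q) x y ≠ 0) :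
    Fintype.card m ≤ (Fintype.card ι).choose (Fintype.card ι / 2) := by
  classical
  set χ : m → Finset ι := fun x => {i | P x i ≠ 0}
  have hχ : ∀ x z, x ≠ z → ¬ χ x ⊆ χ z := by
    intro x z hxz hsub
    obtain ⟨i, -, hi⟩ := Finset.exists_ne_zero_of_sum_ne_zero (hsupp x (σ z) (hσ.ne hxz).symm)
    have hz : P z i * Q i (σ z) = 0 :=
      (Finset.sum_eq_zero_iff_of_nonneg fun j _ => mul_nonneg (hP z j) (hQ j (σ z))).mp
        (hzero z) i (Finset.mem_univ i)
    have hPz : P z i ≠ 0 := by simpa [χ] using hsub (by simpa [χ] using left_ne_zero_of_mul hi)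
    exact mul_ne_zero hPz (right_ne_zero_of_mul hi) hz
  have hinj : χ.Injective := fun x z h => by_contra fun hxz => hχ x z hxz h.le
  have hanti : IsAntichain (· ⊆ ·) (SetLike.coe (Finset.univ.image χ)) := by
    rintro _ hx _ hz hne
    obtain ⟨x, -, rfl⟩ := Finset.mem_image.mp hx
    obtain ⟨z, -, rfl⟩ := Finset.mem_image.mp hz
    exact hχ x z (fun h => hne (congrArg χ h))
  calc Fintype.card m = (Finset.univ.image χ).card :=
        (Finset.card_image_of_injective _ hinj).symm
    _ ≤ _ := hanti.sperner

theorem kronecker_self_sum_four_of_eq_add_sub [CommRing R]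
    (a b c e : Matrix m m R) (he : e = a + b - c) :
    a ⊗ₖ a + b ⊗ₖ b + c ⊗ₖ c + e ⊗ₖ e = a ⊗ₖ (a + e) + b ⊗ₖ (b + e) + c ⊗ₖ (c - e) := by
  subst he
  ext ⟨i, j⟩ ⟨k, l⟩
  simp only [Matrix.add_apply, Matrix.sub_apply, kronecker_apply]
  ring

end Matrix

theorem IsSepState.isState {h d : ℕ} {ρ : MatH h d} (hρ : IsSepState h d ρ) : IsState ρ := by
  obtain ⟨l, p, A, B, hp, hp1, hA, hB, rfl⟩ := hρ
  refine ⟨posSemidef_sum _ fun i _ => ((hA i).1.kronecker (hB i).1).smul ?_, ?_⟩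
  · exact_mod_cast (hp i).le
  · simpa [trace_sum, trace_smul, trace_kronecker, (hA _).2, (hB _).2] using
      congrArg Complex.ofReal hp1

theorem posSemidef_Ediag (i : Fin 4) : (Ediag i).PosSemidef := by
  fin_cases i <;> simp [Ediag, Fin.forall_fin_succ]

theorem trace_Ediag (i : Fin 4) : (Ediag i).trace = 2 := by
  fin_cases i <;> simp [Ediag, trace_diagonal, Fin.sum_univ_four] <;> norm_num

theorem Ediag_three : Ediag 3 = Ediag 0 + Ediag 1 - Ediag 2 := by
  ext x y
  fin_cases x <;> fin_cases y <;> simp [Ediag]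

theorem isSepState_rhoExample : IsSepState 4 4 rhoExample := by
  have hA : ∀ i, ((1 / 2 : ℂ) • Ediag i).PosSemidef ∧ ((1 / 2 : ℂ) • Ediag i).trace = 1 :=
    fun i => ⟨(posSemidef_Ediag i).smul (by positivity), by
      rw [trace_smul, trace_Ediag]; norm_num⟩
  refine ⟨4, fun _ => 1 / 4, fun i => (1 / 2 : ℂ) • Ediag i, fun i => (1 / 2 : ℂ) • Ediag i,
    fun _ => by norm_num, by norm_num, hA, hA, ?_⟩
  rw [rhoExample, Finset.smul_sum]
  refine Finset.sum_congr rfl fun i _ => ?_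
  rw [smul_kronecker, kronecker_smul, smul_smul, smul_smul]
  norm_num

theorem hasSepLen_rhoExample_four : HasSepLen 4 4 rhoExample 4 := by
  refine ⟨fun i => (1 / 16 : ℂ) • Ediag i, Ediag,
    fun i => (posSemidef_Ediag i).smul (by positivity), posSemidef_Ediag, ?_⟩
  simp only [rhoExample, Finset.smul_sum, smul_kronecker]

theorem hasHermDecomp_rhoExample_three : HasHermDecomp 4 4 rhoExample 3 := by
  have hE : ∀ i, (Ediag i).IsHermitian := fun i => (posSemidef_Ediag i).isHermitian
  refine ⟨fun i => (1 / 16 : ℂ) • Ediag i.castSucc,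
    ![Ediag 0 + Ediag 3, Ediag 1 + Ediag 3, Ediag 2 - Ediag 3],
    fun i => ((posSemidef_Ediag _).smul (by positivity)).isHermitian, fun i => ?_, ?_⟩
  · fin_cases i
    exacts [(hE 0).add (hE 3), (hE 1).add (hE 3), (hE 2).sub (hE 3)]
  · rw [rhoExample, Fin.sum_univ_four, kronecker_self_sum_four_of_eq_add_sub _ _ _ _ Ediag_three]
    simp [Fin.sum_univ_three, smul_add, smul_kronecker]

theorem kronDiag_rhoExample :
    kronDiag rhoExample = (1 / 16 : ℂ) • !![2, 1, 1, 0; 1, 2, 0, 1; 1, 0, 2, 1; 0, 1, 1, 2] := by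
  ext x y
  fin_cases x <;> fin_cases y <;>
    simp [rhoExample, kronDiag, Ediag, Fin.sum_univ_four] <;> norm_num

theorem kronDiag_rhoExample_rev (x : Fin 4) : kronDiag rhoExample x x.rev = 0 := by
  rw [kronDiag_rhoExample]
  fin_cases x <;> simp

theorem kronDiag_rhoExample_ne_zero {x y : Fin 4} (h : y ≠ x.rev) :
    kronDiag rhoExample x y ≠ 0 := by
  rw [kronDiag_rhoExample]
  fin_cases x <;> fin_cases y <;> simp_all [Fin.rev]

theorem three_le_rank_kronDiag_rhoExample : 3 ≤ (kronDiag rhoExample).rank := by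
  let e : Fin 3 → Fin 4 := Fin.castSucc
  have hdet : ((kronDiag rhoExample).submatrix e e).det ≠ 0 := by
    rw [kronDiag_rhoExample, det_fin_three]
    simp only [one_div, smul_of, smul_cons, smul_eq_mul, mul_one, mul_zero, smul_empty,
      submatrix_apply, Fin.castSucc_zero, of_apply, cons_val', cons_val_zero, cons_val_fin_one,
      Fin.castSucc_one, cons_val_one, Fin.reduceCastSucc, cons_val, sub_zero, zero_mul, add_zero,
      ne_eq, e]
    norm_num
  calc 3 = ((kronDiag rhoExample).submatrix e e).rank := by
        rw [rank_of_isUnit _ ((isUnit_iff_isUnit_det _).mpr hdet.isUnit), Fintype.card_fin]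
    _ ≤ _ := rank_submatrix_le _ _ _

theorem four_le_of_hasSepLen_rhoExample {l : ℕ} (h : HasSepLen 4 4 rhoExample l) : 4 ≤ l := by
  obtain ⟨A, B, hA, hB, hρ⟩ := h
  have hPQ := kronDiag_sum_kronecker A B
  rw [← hρ] at hPQ
  have hcard := card_le_choose_of_nonneg_mul _ _ (fun x i => (hA i).diag_nonneg)
    (fun i y => (hB i).diag_nonneg) Fin.rev_injective
    (fun x => hPQ ▸ kronDiag_rhoExample_rev x) (fun x y h => hPQ ▸ kronDiag_rhoExample_ne_zero h)
  rw [Fintype.card_fin, Fintype.card_fin] at hcard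
  by_contra! hl
  interval_cases l <;> simp at hcard

theorem three_le_of_hasHermDecomp_rhoExample {r : ℕ} (h : HasHermDecomp 4 4 rhoExample r) :
    3 ≤ r := by
  obtain ⟨A, B, -, -, hρ⟩ := h
  have hrank := rank_kronDiag_sum_kronecker_le A B
  rw [← hρ, Fintype.card_fin] at hrank
  exact three_le_rank_kronDiag_rhoExample.trans hrank

/-- `ρ = (1/16) Σ E_i ⊗ E_i` is a separable state of length `4`
and Schmidt rank `3`. -/
theorem stmt19 :
    IsState rhoExample ∧ IsSepState 4 4 rhoExample ∧
      sepLength 4 4 rhoExample = 4 ∧ schmidtRank 4 4 rhoExample = 3 :=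
  ⟨isSepState_rhoExample.isState, isSepState_rhoExample,
    IsLeast.csInf_eq ⟨hasSepLen_rhoExample_four, fun _ => four_le_of_hasSepLen_rhoExample⟩,
    IsLeast.csInf_eq
      ⟨hasHermDecomp_rhoExample_three, fun _ => three_le_of_hasHermDecomp_rhoExample⟩⟩
end
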